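/- Let b : ℤ → ℝ be a bounded sequence with lim_{N→∞} (1/(2N+1)) · Σ_{m=-N}^{N} b_m² = 1, and let (ξ_k)_{k∈ℤ} be i.i.d. real random variables with P(ξ_k = 1) = P(ξ_k = −1) = 1/2. Then almost surely, for every n ∈ ℤ, lim_{N→∞} (1/(2N+1)) · Σ_{m=-N}^{N} (ξ_m b_m) · (ξ_{m+n} b_{m+n}) = δ_{n,0}, where δ is the Kronecker delta. (Randomising the signs of weights with average squared scattering strength 1 produces vanishing two-point correlations, so that the diffraction of the covering hull equals Lebesgue measure; this is the mechanism behind the random-sign cover of the Thue–Morse hull.) -/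

import Mathlib

/-!
For `n ≠ 0` the products `Y_m = ξ_m ξ_{m+n}` are Walsh functions `∏_{i ∈ {m, m+n}} ξ_i`
of the independent fair signs, hence orthonormal in `L²(P)`. The weighted window averages
`A_N = (2N+1)⁻¹ ∑_{|m| ≤ N} b_m b_{m+n} Y_m` therefore satisfy `E[A_N²] ≤ C⁴ / (2N+1)`,
which is summable along `N = k²`, so `A_{k²} → 0` almost surely. Between consecutive squares
only `O(k)` bounded terms enter a window of size `≍ k²`, so `A_N → 0` along all `N`.
For `n = 0` the signs cancel, `(ξ_m b_m)² = b_m²`, and the limit is the assumed mean of `b²`.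
-/

open MeasureTheory ProbabilityTheory Filter Topology Finset

lemma Finset.prod_mul_prod_eq_prod_symmDiff {ι M : Type*} [CommMonoid M] [DecidableEq ι]
    {f : ι → M} {s t : Finset ι} (h : ∀ i ∈ s ∩ t, f i * f i = 1) :
    (∏ i ∈ s, f i) * ∏ i ∈ t, f i = ∏ i ∈ symmDiff s t, f i := by
  rw [← prod_union_inter, symmDiff_eq_sup_sdiff_inf, sup_eq_union, inf_eq_inter,
    ← prod_sdiff inter_subset_union, mul_assoc, ← prod_mul_distrib, prod_eq_one h, mul_one]

lemma Int.card_Icc_neg_self (N : ℕ) : #(Icc (-(N : ℤ)) N) = 2 * N + 1 := by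
  rw [Int.card_Icc]
  omega

section Signs

variable {Ω : Type*} [MeasurableSpace Ω] {P : Measure Ω}

lemma ae_eq_one_or_eq_neg_one_of_measure_eq_half [IsProbabilityMeasure P] {X : Ω → ℝ}
    (hX : Measurable X) (h₁ : P {ω | X ω = 1} = 1 / 2) (h₂ : P {ω | X ω = -1} = 1 / 2) :
    ∀ᵐ ω ∂P, X ω = 1 ∨ X ω = -1 := by
  have hdisj : Disjoint {ω | X ω = 1} {ω | X ω = -1} :=
    Set.disjoint_left.2 fun ω (h₁ : X ω = 1) (h₂ : X ω = -1) => by linarith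
  have hm : MeasurableSet {ω | X ω = 1 ∨ X ω = -1} :=
    (hX (measurableSet_singleton 1)).union (hX (measurableSet_singleton (-1)))
  rw [ae_iff_measure_eq hm.nullMeasurableSet, Set.ofPred_or,
    measure_union hdisj (hX (measurableSet_singleton _)), h₁, h₂, ENNReal.add_halves,
    measure_univ]

lemma integral_eq_zero_of_measure_eq_half [IsProbabilityMeasure P] {X : Ω → ℝ}
    (hX : Measurable X) (h₁ : P {ω | X ω = 1} = 1 / 2) (h₂ : P {ω | X ω = -1} = 1 / 2) :
    ∫ ω, X ω ∂P = 0 := by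
  have hA : MeasurableSet {ω | X ω = 1} := hX (measurableSet_singleton 1)
  have hB : MeasurableSet {ω | X ω = -1} := hX (measurableSet_singleton (-1))
  have hX_eq : X =ᵐ[P] fun ω => {ω | X ω = 1}.indicator 1 ω - {ω | X ω = -1}.indicator 1 ω := by
    filter_upwards [ae_eq_one_or_eq_neg_one_of_measure_eq_half hX h₁ h₂] with ω hω
    rcases hω with h | h <;> norm_num [Set.indicator_apply, h]
  rw [integral_congr_ae hX_eq, integral_sub ((integrable_const 1).indicator hA)
    ((integrable_const 1).indicator hB), integral_indicator_one hA, integral_indicator_one hB,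
    measureReal_def, measureReal_def, h₁, h₂, sub_self]

variable {ι : Type*} {ξ : ι → Ω → ℝ}

lemma ProbabilityTheory.iIndepFun.integral_finsetProd_eq_prod_integral (hindep : iIndepFun ξ P)
    (hmeas : ∀ i, AEStronglyMeasurable (ξ i) P) (s : Finset ι) :
    ∫ ω, ∏ i ∈ s, ξ i ω ∂P = ∏ i ∈ s, ∫ ω, ξ i ω ∂P := by
  have := (hindep.precomp (g := ((↑) : s → ι)) Subtype.val_injective
    ).integral_fun_prod_eq_prod_integral fun i => hmeas i
  simp_rw [← prod_coe_sort s]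
  exact this

lemma integral_prod_mul_prod_of_iIndepFun [IsProbabilityMeasure P] [DecidableEq ι]
    (hindep : iIndepFun ξ P) (hmeas : ∀ i, AEStronglyMeasurable (ξ i) P)
    (habs : ∀ i, ∀ᵐ ω ∂P, |ξ i ω| = 1) (hzero : ∀ i, ∫ ω, ξ i ω ∂P = 0) (s t : Finset ι) :
    ∫ ω, (∏ i ∈ s, ξ i ω) * ∏ i ∈ t, ξ i ω ∂P = if s = t then 1 else 0 := by
  have hprod : ∀ᵐ ω ∂P, (∏ i ∈ s, ξ i ω) * ∏ i ∈ t, ξ i ω = ∏ i ∈ symmDiff s t, ξ i ω := by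
    filter_upwards [(eventually_all_finset (s ∩ t)).2 fun i _ => habs i] with ω hω
    exact prod_mul_prod_eq_prod_symmDiff fun i hi => by rw [← abs_mul_abs_self, hω i hi, one_mul]
  rw [integral_congr_ae hprod, hindep.integral_finsetProd_eq_prod_integral hmeas]
  split_ifs with hst
  · simp [hst]
  · obtain ⟨i, hi⟩ := symmDiff_nonempty.2 hst
    exact prod_eq_zero hi (hzero i)

end Signs

section Orthonormal

variable {Ω ι : Type*} [MeasurableSpace Ω] {P : Measure Ω} {Y : ι → Ω → ℝ}

lemma integrable_sq_sum_of_integrable_mul (hint : ∀ i j, Integrable (fun ω => Y i ω * Y j ω) P)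
    (c : ι → ℝ) (s : Finset ι) : Integrable (fun ω => (∑ i ∈ s, c i * Y i ω) ^ 2) P := by
  simp_rw [sq, sum_mul_sum, mul_mul_mul_comm (c _) (Y _ _)]
  exact integrable_finsetSum _ fun i _ => integrable_finsetSum _ fun j _ =>
    (hint i j).const_mul _

lemma integral_sq_sum_of_orthonormal [DecidableEq ι]
    (hint : ∀ i j, Integrable (fun ω => Y i ω * Y j ω) P)
    (horth : ∀ i j, ∫ ω, Y i ω * Y j ω ∂P = if i = j then 1 else 0) (c : ι → ℝ) (s : Finset ι) :
    ∫ ω, (∑ i ∈ s, c i * Y i ω) ^ 2 ∂P = ∑ i ∈ s, c i ^ 2 := by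
  simp_rw [sq, sum_mul_sum, mul_mul_mul_comm (c _) (Y _ _)]
  rw [integral_finsetSum _ fun i _ => integrable_finsetSum _ fun j _ => (hint i j).const_mul _]
  refine sum_congr rfl fun i hi => ?_
  rw [integral_finsetSum _ fun j _ => (hint i j).const_mul _]
  simp_rw [integral_const_mul, horth, mul_ite, mul_one, mul_zero, sum_ite_eq, if_pos hi]

end Orthonormal

lemma ae_tendsto_zero_of_summable_integral_sq {Ω : Type*} [MeasurableSpace Ω] {P : Measure Ω}
    {f : ℕ → Ω → ℝ} (hf : ∀ k, AEMeasurable (f k) P)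
    (hint : ∀ k, Integrable (fun ω => f k ω ^ 2) P)
    (hsum : Summable fun k => ∫ ω, f k ω ^ 2 ∂P) :
    ∀ᵐ ω ∂P, Tendsto (fun k => f k ω) atTop (𝓝 0) := by
  have hmeas : ∀ k, AEMeasurable (fun ω => ENNReal.ofReal (f k ω ^ 2)) P :=
    fun k => ((hf k).pow_const 2).ennreal_ofReal
  have hfin : ∫⁻ ω, ∑' k, ENNReal.ofReal (f k ω ^ 2) ∂P ≠ ⊤ := by
    simp_rw [lintegral_tsum hmeas, ← ofReal_integral_eq_lintegral_ofReal (hint _)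
      (ae_of_all _ fun ω => sq_nonneg _), ← ENNReal.ofReal_tsum_of_nonneg
      (fun k => integral_nonneg fun ω => sq_nonneg _) hsum]
    exact ENNReal.ofReal_ne_top
  filter_upwards [ae_lt_top' (AEMeasurable.tsum hmeas) hfin] with ω hω
  have hsq : Tendsto (fun k => f k ω ^ 2) atTop (𝓝 0) := by
    have := (ENNReal.summable_toReal hω.ne).tendsto_atTop_zero
    simpa [ENNReal.toReal_ofReal (sq_nonneg _)] using this
  have habs : Tendsto (fun k => |f k ω|) atTop (𝓝 0) := by
    simpa [Real.sqrt_sq_eq_abs] using hsq.sqrt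
  exact (tendsto_zero_iff_abs_tendsto_zero _).2 habs

noncomputable def symmAvg (a : ℤ → ℝ) (N : ℕ) : ℝ :=
  (1 / (2 * (N : ℝ) + 1)) * ∑ m ∈ Icc (-(N : ℤ)) (N : ℤ), a m

namespace symmAvg

variable {a : ℤ → ℝ} {B : ℝ}

lemma abs_sum_sub_le (ha : ∀ m, |a m| ≤ B) {M N : ℕ} (hMN : M ≤ N) :
    |∑ m ∈ Icc (-(N : ℤ)) N, a m - ∑ m ∈ Icc (-(M : ℤ)) M, a m| ≤ 2 * ((N : ℝ) - M) * B := by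
  have hsub : Icc (-(M : ℤ)) M ⊆ Icc (-(N : ℤ)) N := Icc_subset_Icc (by omega) (by omega)
  rw [← sum_sdiff_eq_sub hsub]
  calc |∑ m ∈ Icc (-(N : ℤ)) N \ Icc (-(M : ℤ)) M, a m|
      ≤ ∑ m ∈ Icc (-(N : ℤ)) N \ Icc (-(M : ℤ)) M, B :=
        (abs_sum_le_sum_abs _ _).trans (sum_le_sum fun m _ => ha m)
    _ = 2 * ((N : ℝ) - M) * B := by
      rw [sum_const, card_sdiff_of_subset hsub, Int.card_Icc_neg_self, Int.card_Icc_neg_self,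
        nsmul_eq_mul, Nat.cast_sub (by omega)]
      push_cast
      ring

lemma abs_le_abs_add_of_le (ha : ∀ m, |a m| ≤ B) {M N : ℕ} (hMN : M ≤ N) :
    |symmAvg a N| ≤ |symmAvg a M| + 2 * ((N : ℝ) - M) * B / (2 * M + 1) := by
  have hM : (0 : ℝ) < 2 * M + 1 := by positivity
  have hMN' : (2 * M + 1 : ℝ) ≤ 2 * N + 1 := by gcongr
  have hsum := abs_sum_sub_le ha hMN
  simp only [symmAvg, abs_mul, one_div, abs_inv, abs_of_pos hM, abs_of_pos (hM.trans_le hMN')]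
  calc (2 * (N : ℝ) + 1)⁻¹ * |∑ m ∈ Icc (-(N : ℤ)) N, a m|
      ≤ (2 * (M : ℝ) + 1)⁻¹ * (|∑ m ∈ Icc (-(M : ℤ)) M, a m| + 2 * ((N : ℝ) - M) * B) := by
        gcongr
        linarith [abs_sub_abs_le_abs_sub (∑ m ∈ Icc (-(N : ℤ)) N, a m)
          (∑ m ∈ Icc (-(M : ℤ)) M, a m)]
    _ = _ := by ring

lemma tendsto_of_tendsto_sq (ha : ∀ m, |a m| ≤ B)
    (h : Tendsto (fun k : ℕ => symmAvg a (k ^ 2)) atTop (𝓝 0)) :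
    Tendsto (symmAvg a) atTop (𝓝 0) := by
  have hB : 0 ≤ B := (abs_nonneg _).trans (ha 0)
  have hgap : Tendsto (fun k : ℕ => 4 * (k : ℝ) * B / (2 * (k : ℝ) ^ 2 + 1)) atTop (𝓝 0) := by
    refine squeeze_zero' (Eventually.of_forall fun k => by positivity)
      ((eventually_ge_atTop 1).mono fun k hk => ?_)
      (tendsto_const_div_atTop_nhds_zero_nat (2 * B))
    have hk : (1 : ℝ) ≤ k := by exact_mod_cast hk
    rw [div_le_div_iff₀ (by positivity) (by positivity)]
    nlinarith
  have hsqrt : Tendsto Nat.sqrt atTop atTop :=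
    tendsto_atTop_atTop.2 fun k => ⟨k * k, fun N hN => Nat.le_sqrt.2 hN⟩
  refine squeeze_zero_norm (fun N => ?_) ((h.norm.add hgap).comp hsqrt |>.trans (by simp))
  set k := Nat.sqrt N
  have hgapN : 2 * ((N : ℝ) - (k ^ 2 : ℕ)) * B ≤ 4 * k * B := by
    have : (N : ℝ) ≤ k ^ 2 + 2 * k := by exact_mod_cast (by nlinarith [Nat.sqrt_le_add N])
    push_cast
    nlinarith
  refine (abs_le_abs_add_of_le ha (Nat.sqrt_le' N)).trans ?_
  simp only [Function.comp, Real.norm_eq_abs]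
  push_cast at hgapN ⊢
  gcongr

end symmAvg

lemma ae_tendsto_symmAvg_sq_of_orthonormal {Ω : Type*} [MeasurableSpace Ω] {P : Measure Ω}
    {Y : ℤ → Ω → ℝ} (hmeas : ∀ i, AEMeasurable (Y i) P)
    (hint : ∀ i j, Integrable (fun ω => Y i ω * Y j ω) P)
    (horth : ∀ i j, ∫ ω, Y i ω * Y j ω ∂P = if i = j then 1 else 0)
    {c : ℤ → ℝ} {B : ℝ} (hc : ∀ m, |c m| ≤ B) :
    ∀ᵐ ω ∂P, Tendsto (fun k : ℕ => symmAvg (fun m => c m * Y m ω) (k ^ 2)) atTop (𝓝 0) := by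
  have hsq : ∀ N ω, symmAvg (fun m => c m * Y m ω) N ^ 2
      = (1 / (2 * (N : ℝ) + 1)) ^ 2 * (∑ m ∈ Icc (-(N : ℤ)) N, c m * Y m ω) ^ 2 :=
    fun N ω => mul_pow _ _ _
  have hvar : ∀ N : ℕ, ∫ ω, symmAvg (fun m => c m * Y m ω) N ^ 2 ∂P ≤ B ^ 2 / (2 * N + 1) := by
    intro N
    have hsum : ∑ m ∈ Icc (-(N : ℤ)) N, c m ^ 2 ≤ (2 * N + 1) * B ^ 2 := by
      calc ∑ m ∈ Icc (-(N : ℤ)) N, c m ^ 2 ≤ ∑ m ∈ Icc (-(N : ℤ)) N, B ^ 2 :=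
            sum_le_sum fun m _ => sq_abs (c m) ▸ pow_le_pow_left₀ (abs_nonneg _) (hc m) 2
        _ = (2 * N + 1) * B ^ 2 := by
            rw [sum_const, Int.card_Icc_neg_self, nsmul_eq_mul]
            push_cast
            ring
    simp_rw [hsq, integral_const_mul, integral_sq_sum_of_orthonormal hint horth]
    rw [div_pow, one_pow, div_mul_eq_mul_div, one_mul,
      div_le_div_iff₀ (by positivity) (by positivity)]
    nlinarith
  refine ae_tendsto_zero_of_summable_integral_sq (fun k => ?_) (fun k => ?_) ?_
  · unfold symmAvg
    fun_prop
  · simp_rw [hsq]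
    exact (integrable_sq_sum_of_integrable_mul hint c _).const_mul _
  · have hp : Summable fun k : ℕ => 1 / ((k : ℝ) + 1) ^ 2 := by
      exact_mod_cast (summable_nat_add_iff 1).2 (Real.summable_one_div_nat_pow.2 one_lt_two)
    refine Summable.of_nonneg_of_le (fun k => integral_nonneg fun ω => sq_nonneg _)
      (fun k => (hvar _).trans ?_) (hp.mul_left (2 * B ^ 2))
    rw [mul_one_div, div_le_div_iff₀ (by positivity) (by positivity)]
    push_cast
    nlinarith [sq_nonneg (B * ((k : ℝ) - 1))]

section ShiftedProducts

variable {Ω : Type*} [MeasurableSpace Ω] {P : Measure Ω} [IsProbabilityMeasure P]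
  {ξ : ℤ → Ω → ℝ} {n : ℤ}

lemma pair_add_eq_pair_add_iff {i j : ℤ} : ({i, i + n} : Finset ℤ) = {j, j + n} ↔ i = j := by
  refine ⟨fun h => ?_, fun h => h ▸ rfl⟩
  have hi : i ∈ ({j, j + n} : Finset ℤ) := h ▸ mem_insert_self i _
  have hj : j ∈ ({i, i + n} : Finset ℤ) := h.symm ▸ mem_insert_self j _
  simp only [mem_insert, mem_singleton] at hi hj
  omega

lemma integral_mul_shift_mul_mul_shift (hindep : iIndepFun ξ P) (hmeas : ∀ k, Measurable (ξ k))
    (habs : ∀ k, ∀ᵐ ω ∂P, |ξ k ω| = 1) (hzero : ∀ k, ∫ ω, ξ k ω ∂P = 0) (hn : n ≠ 0)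
    (i j : ℤ) :
    ∫ ω, (ξ i ω * ξ (i + n) ω) * (ξ j ω * ξ (j + n) ω) ∂P = if i = j then 1 else 0 := by
  have hpair : ∀ m ω, ξ m ω * ξ (m + n) ω = ∏ k ∈ {m, m + n}, ξ k ω := fun m ω => by
    rw [prod_pair (by omega)]
  simp_rw [hpair, integral_prod_mul_prod_of_iIndepFun hindep
    (fun k => (hmeas k).aestronglyMeasurable) habs hzero, pair_add_eq_pair_add_iff]

lemma integrable_mul_shift_mul_mul_shift (hmeas : ∀ k, Measurable (ξ k))
    (habs : ∀ k, ∀ᵐ ω ∂P, |ξ k ω| = 1) (i j : ℤ) :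
    Integrable (fun ω => (ξ i ω * ξ (i + n) ω) * (ξ j ω * ξ (j + n) ω)) P := by
  refine .of_bound (by fun_prop) 1 ?_
  filter_upwards [habs i, habs (i + n), habs j, habs (j + n)] with ω h₁ h₂ h₃ h₄
  simp [h₁, h₂, h₃, h₄]

lemma ae_tendsto_symmAvg_mul_shift (hindep : iIndepFun ξ P) (hmeas : ∀ k, Measurable (ξ k))
    (habs : ∀ k, ∀ᵐ ω ∂P, |ξ k ω| = 1) (hzero : ∀ k, ∫ ω, ξ k ω ∂P = 0) (hn : n ≠ 0)
    {c : ℤ → ℝ} {B : ℝ} (hc : ∀ m, |c m| ≤ B) :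
    ∀ᵐ ω ∂P, Tendsto (symmAvg fun m => c m * (ξ m ω * ξ (m + n) ω)) atTop (𝓝 0) := by
  filter_upwards [ae_all_iff.2 habs, ae_tendsto_symmAvg_sq_of_orthonormal
    (Y := fun i ω => ξ i ω * ξ (i + n) ω)
    (fun i => ((hmeas i).mul (hmeas (i + n))).aemeasurable)
    (integrable_mul_shift_mul_mul_shift hmeas habs)
    (integral_mul_shift_mul_mul_shift hindep hmeas habs hzero hn) hc] with ω hω hlim
  refine symmAvg.tendsto_of_tendsto_sq (B := B) (fun m => ?_) hlim
  rw [abs_mul, abs_mul, hω, hω, mul_one, mul_one]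
  exact hc m

end ShiftedProducts

/-- Randomising the signs of a bounded weight sequence `b` with average
squared scattering strength `1` via i.i.d. fair ±1 variables `ξ` produces, almost
surely, correlation sums converging to the Kronecker delta `δ_{n,0}` for every
`n : ℤ`; hence the diffraction of the covering hull equals Lebesgue measure. -/
theorem random_sign_cover_correlations
    {Ω : Type*} [MeasurableSpace Ω] (P : Measure Ω) [IsProbabilityMeasure P]
    (b : ℤ → ℝ) (C : ℝ) (hbdd : ∀ n : ℤ, |b n| ≤ C)
    (hmean : Tendsto (fun N : ℕ =>
        (1 / (2*(N:ℝ)+1)) * ∑ m ∈ Finset.Icc (-(N:ℤ)) (N:ℤ), (b m)^2)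
      atTop (nhds 1))
    (ξ : ℤ → Ω → ℝ) (hmeas : ∀ k, Measurable (ξ k))
    (hindep : iIndepFun ξ P)
    (hdist : ∀ k, P {ω | ξ k ω = 1} = 1/2 ∧ P {ω | ξ k ω = -1} = 1/2) :
    ∀ᵐ ω ∂P, ∀ n : ℤ,
      Tendsto (fun N : ℕ =>
          (1 / (2*(N:ℝ)+1)) *
            ∑ m ∈ Finset.Icc (-(N:ℤ)) (N:ℤ),
              (ξ m ω * b m) * (ξ (m+n) ω * b (m+n)))
        atTop (nhds (if n = 0 then 1 else 0)) := by
  have habs : ∀ k, ∀ᵐ ω ∂P, |ξ k ω| = 1 := fun k =>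
    (ae_eq_one_or_eq_neg_one_of_measure_eq_half (hmeas k) (hdist k).1 (hdist k).2).mono
      fun ω h => (abs_eq zero_le_one).2 h
  have hzero : ∀ k, ∫ ω, ξ k ω ∂P = 0 := fun k =>
    integral_eq_zero_of_measure_eq_half (hmeas k) (hdist k).1 (hdist k).2
  rw [ae_all_iff]
  intro n
  rcases eq_or_ne n 0 with rfl | hn
  · filter_upwards [ae_all_iff.2 habs] with ω hω
    refine hmean.congr fun N => congrArg _ <| sum_congr rfl fun m _ => ?_
    rw [add_zero, mul_mul_mul_comm, ← abs_mul_abs_self (ξ m ω), hω, one_mul, one_mul, sq]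
  have hc : ∀ m, |b m * b (m + n)| ≤ C ^ 2 := fun m => by
    rw [abs_mul, sq]
    exact mul_le_mul (hbdd m) (hbdd _) (abs_nonneg _) ((abs_nonneg _).trans (hbdd m))
  filter_upwards [ae_tendsto_symmAvg_mul_shift hindep hmeas habs hzero hn hc] with ω hω
  rw [if_neg hn]
  change Tendsto (symmAvg fun m => (ξ m ω * b m) * (ξ (m + n) ω * b (m + n))) atTop (𝓝 0)
  convert hω using 3 with m
  ring
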